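/- arXiv:1709.03202 — 3 statements merged into one kernel-verified Lean document; each statement's English description precedes it below -/
import Mathlib

section
/- (Close-center lemma) Let C = {C_1,...,C_k} be a center-based clustering of X satisfying the γ-margin property with centers μ_1,...,μ_k. Suppose μ'_i ∈ ℝ^m satisfies d(μ'_i, μ_i) < ε·r(C_i) where ε ≤ (γ-1)/2 and r(C_i) = max_{x∈C_i} d(x,μ_i). Then for all x ∈ C_i and all y ∈ X \ C_i, d(x, μ'_i) < d(y, μ'_i). -/
/-- Close-center lemma: an approximate center μ'_i with
d(μ'_i,μ_i) < ε·r(C_i), ε ≤ (γ-1)/2, separates C_i from the rest of X. -/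
theorem stmt2 {m k : ℕ} (X : Set (EuclideanSpace ℝ (Fin m))) (hX : X.Finite)
    (C : Fin k → Set (EuclideanSpace ℝ (Fin m)))
    (μ μ' : Fin k → EuclideanSpace ℝ (Fin m)) (r : Fin k → ℝ) (γ ε : ℝ)
    (hγ : 1 < γ) (hε0 : 0 < ε) (hε : ε ≤ (γ - 1) / 2)
    (hSub : ∀ i, C i ⊆ X)
    (hr : ∀ i, IsGreatest ((fun z => dist z (μ i)) '' C i) (r i))
    (hCenter : ∀ x ∈ X, ∀ i, x ∈ C i ↔ ∀ j, j ≠ i → dist x (μ i) < dist x (μ j))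
    (hMargin : ∀ i, ∀ x ∈ C i, ∀ y ∈ X, y ∉ C i → γ * dist x (μ i) < dist y (μ i))
    (hclose : ∀ i, dist (μ' i) (μ i) < ε * r i) :
    ∀ i, ∀ x ∈ C i, ∀ y ∈ X, y ∉ C i → dist x (μ' i) < dist y (μ' i) := by
  intro i x hx y hy hyC
  obtain ⟨⟨z, hz, hzr⟩, hub⟩ := hr i
  have hxr : dist x (μ i) ≤ r i := hub ⟨x, hx, rfl⟩
  have hr0 : 0 ≤ r i := le_trans dist_nonneg hxr
  have hmarg : γ * r i < dist y (μ i) := hzr ▸ hMargin i z hz y hy hyC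
  have hclosei := hclose i
  have h1 : dist x (μ' i) ≤ dist x (μ i) + dist (μ i) (μ' i) := dist_triangle _ _ _
  have h2 : dist y (μ i) ≤ dist y (μ' i) + dist (μ' i) (μ i) := dist_triangle _ _ _
  rw [dist_comm (μ i)] at h1
  nlinarith [dist_nonneg (x := x) (y := μ i)]
end

section
/- (Vector Hoeffding inequality) Let Y_1,...,Y_s be i.i.d. random vectors in ℝ^m with E[Y_i] = 0 and ‖Y_i‖₂ ≤ r_i almost surely, for positive constants r_1,...,r_s. Then for any t ≥ 0, P(‖(1/s)∑_{i=1}^s Y_i‖₂ > t) ≤ (m+1)·exp(−t²/(2σ²)), where σ² = (1/s²)∑_{i=1}^s r_i². -/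
open MeasureTheory ProbabilityTheory

open Real

/-- sinh(θy) ≤ θ sinh y for θ ∈ [0,1], y ≥ 0. -/
lemma sinh_mul_le {θ y : ℝ} (hθ0 : 0 ≤ θ) (hθ1 : θ ≤ 1) (hy : 0 ≤ y) :
    Real.sinh (θ * y) ≤ θ * Real.sinh y := by
  have hderiv : ∀ x : ℝ, HasDerivAt (fun z => θ * Real.sinh z - Real.sinh (θ * z))
      (θ * Real.cosh x - Real.cosh (θ * x) * θ) x := by
    intro x
    exact ((Real.hasDerivAt_sinh x).const_mul θ).sub
      ((Real.hasDerivAt_sinh (θ * x)).comp x (by simpa using (hasDerivAt_id x).const_mul θ))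
  have hmono : MonotoneOn (fun z => θ * Real.sinh z - Real.sinh (θ * z)) (Set.Ici 0) := by
    apply monotoneOn_of_deriv_nonneg (convex_Ici 0)
    · exact (Continuous.sub (continuous_const.mul continuous_sinh)
        (continuous_sinh.comp (continuous_const.mul continuous_id))).continuousOn
    · intro x hx
      exact (hderiv x).differentiableAt.differentiableWithinAt
    · intro x hx
      rw [(hderiv x).deriv]
      rw [interior_Ici] at hx
      have hx0 : (0:ℝ) ≤ x := le_of_lt hx
      have : Real.cosh (θ * x) ≤ Real.cosh x := by
        rw [Real.cosh_le_cosh]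
        rw [abs_of_nonneg (mul_nonneg hθ0 hx0), abs_of_nonneg hx0]
        nlinarith
      nlinarith
  have h0 : (fun z => θ * Real.sinh z - Real.sinh (θ * z)) 0 ≤
      (fun z => θ * Real.sinh z - Real.sinh (θ * z)) y :=
    hmono (Set.self_mem_Ici) hy hy
  simp at h0
  linarith

/-- cosh ∘ sqrt is convex on [0, ∞). -/
lemma convexOn_cosh_sqrt : ConvexOn ℝ (Set.Ici 0) (fun u => Real.cosh (Real.sqrt u)) := by
  have hderiv : ∀ u : ℝ, 0 < u → HasDerivAt (fun u => Real.cosh (Real.sqrt u))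
      (Real.sinh (Real.sqrt u) * (1 / (2 * Real.sqrt u))) u := by
    intro u hu
    exact (Real.hasDerivAt_cosh (Real.sqrt u)).comp u (Real.hasDerivAt_sqrt (ne_of_gt hu))
  apply MonotoneOn.convexOn_of_deriv (convex_Ici 0)
  · exact (Real.continuous_cosh.comp Real.continuous_sqrt).continuousOn
  · rw [interior_Ici]
    intro u hu
    exact (hderiv u hu).differentiableAt.differentiableWithinAt
  · rw [interior_Ici]
    intro u hu v hv huv
    rw [(hderiv u hu).deriv, (hderiv v hv).deriv]
    have hsu : 0 < Real.sqrt u := Real.sqrt_pos.2 hu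
    have hsv : 0 < Real.sqrt v := Real.sqrt_pos.2 hv
    have hle : Real.sqrt u ≤ Real.sqrt v := Real.sqrt_le_sqrt huv
    have key : Real.sinh (Real.sqrt u) ≤ (Real.sqrt u / Real.sqrt v) * Real.sinh (Real.sqrt v) := by
      have := sinh_mul_le (θ := Real.sqrt u / Real.sqrt v) (y := Real.sqrt v)
        (by positivity) (by rw [div_le_one hsv]; exact hle) (le_of_lt hsv)
      rwa [div_mul_cancel₀ _ (ne_of_gt hsv)] at this
    rw [mul_one_div, mul_one_div, div_le_div_iff₀ (by positivity) (by positivity)]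
    have h2 : Real.sinh √u * √v ≤ √u * Real.sinh √v := by
      have h := mul_le_mul_of_nonneg_right key (le_of_lt hsv)
      have he : √u / √v * Real.sinh √v * √v = √u * Real.sinh √v := by
        field_simp
      linarith [he ▸ h]
    nlinarith

/-- Fact (ii): b·sinh(lr)/r − sinh(lb) ≤ cosh(lr) − cosh(lb), for 0 ≤ b ≤ r, l ≥ 0. -/
lemma fact_two {l r b : ℝ} (hl : 0 ≤ l) (hr : 0 < r) (hb0 : 0 ≤ b) (hbr : b ≤ r) :
    b * Real.sinh (l * r) / r - Real.sinh (l * b) ≤ Real.cosh (l * r) - Real.cosh (l * b) := by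
  set θ : ℝ := (r + b) / (2 * r) with hθ
  have hθ0 : 0 ≤ θ := by positivity
  have hθ1 : θ ≤ 1 := by rw [hθ, div_le_one (by positivity)]; linarith
  have hb1 : 0 ≤ 1 - θ := by linarith
  have hab : θ + (1 - θ) = 1 := by ring
  have hcvx := convexOn_exp.2 (Set.mem_univ (-(l * r))) (Set.mem_univ (l * r))
    hθ0 hb1 hab
  have hcomb : θ • (-(l * r)) + (1 - θ) • (l * r) = -(l * b) := by
    simp only [smul_eq_mul, hθ]
    field_simp
    ring
  rw [hcomb] at hcvx
  simp only [smul_eq_mul] at hcvx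
  rw [Real.cosh_eq, Real.cosh_eq, Real.sinh_eq, Real.sinh_eq]
  rw [hθ] at hcvx
  have h1 : (0:ℝ) < Real.exp (l * r) := Real.exp_pos _
  have h2 : (0:ℝ) < Real.exp (-(l * r)) := Real.exp_pos _
  have h3 : (0:ℝ) < Real.exp (-(l * b)) := Real.exp_pos _
  have hrne : r ≠ 0 := ne_of_gt hr
  have hcvx' : 2 * r * Real.exp (-(l * b)) ≤
      (r + b) * Real.exp (-(l * r)) + (r - b) * Real.exp (l * r) := by
    have h := mul_le_mul_of_nonneg_left hcvx (by positivity : (0:ℝ) ≤ 2 * r)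
    calc 2 * r * Real.exp (-(l * b)) ≤ 2 * r * ((r + b) / (2 * r) * Real.exp (-(l * r)) +
        (1 - (r + b) / (2 * r)) * Real.exp (l * r)) := h
      _ = (r + b) * Real.exp (-(l * r)) + (r - b) * Real.exp (l * r) := by
          field_simp
          ring
  have h2r : (0:ℝ) < 2 * r := by positivity
  rw [← mul_le_mul_iff_right₀ h2r]
  have hexp : 2 * r * (b * ((Real.exp (l * r) - Real.exp (-(l * r))) / 2) / r) =
      b * (Real.exp (l * r) - Real.exp (-(l * r))) := by field_simp
  rw [mul_sub, hexp]
  nlinarith [hcvx']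

/-- sinh x ≤ cosh x. -/
lemma sinh_le_cosh' (x : ℝ) : Real.sinh x ≤ Real.cosh x := by
  rw [Real.sinh_eq, Real.cosh_eq]
  have := Real.exp_pos (-x)
  linarith

section KeyLemma
variable {E : Type*} [NormedAddCommGroup E] [InnerProductSpace ℝ E]

/-- Step 1 (chord bound via convexity of cosh∘sqrt):
cosh(l‖v+w‖) ≤ cosh(l‖v‖)cosh(l‖w‖) + (⟪v,w⟫/(‖v‖‖w‖))·sinh(l‖v‖)sinh(l‖w‖). -/
lemma step_one {l : ℝ} (hl : 0 ≤ l) {v w : E} (hv : v ≠ 0) (hw : w ≠ 0) :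
    Real.cosh (l * ‖v + w‖) ≤ Real.cosh (l * ‖v‖) * Real.cosh (l * ‖w‖)
      + ((inner ℝ v w : ℝ) / (‖v‖ * ‖w‖)) * (Real.sinh (l * ‖v‖) * Real.sinh (l * ‖w‖)) := by
  set a : ℝ := ‖v‖ with ha'
  set b : ℝ := ‖w‖ with hb'
  set c : ℝ := (inner ℝ v w : ℝ) with hc'
  have ha : 0 < a := norm_pos_iff.2 hv
  have hb : 0 < b := norm_pos_iff.2 hw
  have hcab : |c| ≤ a * b := abs_real_inner_le_norm v w
  set θ : ℝ := (a * b + c) / (2 * (a * b)) with hθ'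
  have hθ0 : 0 ≤ θ := by
    apply div_nonneg _ (by positivity)
    have := abs_le.1 hcab
    linarith [this.1]
  have hθ1 : 1 - θ ≥ 0 := by
    have := abs_le.1 hcab
    have h1 : θ ≤ 1 := by
      rw [hθ', div_le_one (by positivity)]
      linarith [this.2]
    linarith
  have hnorm : ‖v + w‖ ^ 2 = a ^ 2 + 2 * c + b ^ 2 := by
    rw [ha', hb', hc']
    exact norm_add_sq_real v w
  have hcomb : (1 - θ) • ((l * (a - b)) ^ 2) + θ • ((l * (a + b)) ^ 2) = (l * ‖v + w‖) ^ 2 := by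
    simp only [smul_eq_mul]
    have h4 : θ * (4 * (a * b)) = 2 * (a * b + c) := by
      rw [hθ']; field_simp; ring
    have : (1 - θ) * (l * (a - b)) ^ 2 + θ * (l * (a + b)) ^ 2
        = l ^ 2 * ((a - b) ^ 2 + θ * (4 * (a * b))) := by ring
    rw [this, h4, mul_pow, hnorm]
    ring
  have hcvx := convexOn_cosh_sqrt.2 (Set.mem_Ici.2 (sq_nonneg (l * (a - b))))
    (Set.mem_Ici.2 (sq_nonneg (l * (a + b)))) hθ1 hθ0 (by ring)
  rw [hcomb] at hcvx
  have hs1 : Real.sqrt ((l * ‖v + w‖) ^ 2) = l * ‖v + w‖ :=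
    Real.sqrt_sq (by positivity)
  have hs2 : Real.cosh (Real.sqrt ((l * (a - b)) ^ 2)) = Real.cosh (l * a - l * b) := by
    rw [Real.sqrt_sq_eq_abs, Real.cosh_abs, mul_sub]
  have hs3 : Real.cosh (Real.sqrt ((l * (a + b)) ^ 2)) = Real.cosh (l * a + l * b) := by
    rw [Real.sqrt_sq_eq_abs, Real.cosh_abs, mul_add]
  simp only [smul_eq_mul] at hcvx
  rw [hs1, hs2, hs3] at hcvx
  rw [Real.cosh_sub, Real.cosh_add] at hcvx
  calc Real.cosh (l * ‖v + w‖)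
      ≤ (1 - θ) * (Real.cosh (l*a) * Real.cosh (l*b) - Real.sinh (l*a) * Real.sinh (l*b))
        + θ * (Real.cosh (l*a) * Real.cosh (l*b) + Real.sinh (l*a) * Real.sinh (l*b)) := hcvx
    _ = Real.cosh (l*a) * Real.cosh (l*b)
        + (2*θ - 1) * (Real.sinh (l*a) * Real.sinh (l*b)) := by ring
    _ = Real.cosh (l*a) * Real.cosh (l*b)
        + (c / (a*b)) * (Real.sinh (l*a) * Real.sinh (l*b)) := by
        congr 2
        rw [hθ']
        field_simp
        ring

/-- Key pointwise inequality: cosh(l‖v+w‖) ≤ cosh(l‖v‖)cosh(lr) + ⟪v,w⟫·K(v). -/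
lemma key_pointwise {l r : ℝ} (hl : 0 ≤ l) (hr : 0 < r) (v w : E) (hw : ‖w‖ ≤ r) :
    Real.cosh (l * ‖v + w‖) ≤ Real.cosh (l * ‖v‖) * Real.cosh (l * r)
      + (inner ℝ v w : ℝ) * (Real.sinh (l * ‖v‖) * Real.sinh (l * r) / (‖v‖ * r)) := by
  rcases eq_or_ne v 0 with hv | hv
  · subst hv
    simp only [norm_zero, zero_add, inner_zero_left, zero_mul, add_zero, mul_zero,
      Real.cosh_zero, one_mul]
    have : Real.cosh (l * ‖w‖) ≤ Real.cosh (l * r) := by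
      rw [Real.cosh_le_cosh, abs_of_nonneg (by positivity), abs_of_nonneg (by positivity)]
      exact mul_le_mul_of_nonneg_left hw hl
    exact this
  rcases eq_or_ne w 0 with hw0 | hw0
  · subst hw0
    simp only [add_zero, inner_zero_right, zero_mul]
    nlinarith [Real.one_le_cosh (l * r), Real.cosh_pos (l * ‖v‖)]
  -- main case
  set a : ℝ := ‖v‖ with ha'
  set b : ℝ := ‖w‖ with hb'
  set c : ℝ := (inner ℝ v w : ℝ) with hc'
  have ha : 0 < a := norm_pos_iff.2 hv
  have hb : 0 < b := norm_pos_iff.2 hw0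
  have hcab : |c| ≤ a * b := abs_real_inner_le_norm v w
  have h1 := step_one hl hv hw0
  refine h1.trans ?_
  -- Step 2: replace b by r
  set Ca := Real.cosh (l * a) with hCa
  set Cb := Real.cosh (l * b) with hCb
  set Cr := Real.cosh (l * r) with hCr
  set Sa := Real.sinh (l * a) with hSa
  set Sb := Real.sinh (l * b) with hSb
  set Sr := Real.sinh (l * r) with hSr
  -- facts
  have hSa0 : 0 ≤ Sa := Real.sinh_nonneg_iff.2 (by positivity)
  have hSb0 : 0 ≤ Sb := Real.sinh_nonneg_iff.2 (by positivity)
  have hSr0 : 0 ≤ Sr := Real.sinh_nonneg_iff.2 (by positivity)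
  have hCa0 : 0 < Ca := Real.cosh_pos _
  have hSaCa : Sa ≤ Ca := sinh_le_cosh' _
  -- fact (i): Sb ≤ (b/r) * Sr
  have hfi : Sb ≤ b / r * Sr := by
    have := sinh_mul_le (θ := b / r) (y := l * r) (by positivity)
      (by rw [div_le_one hr]; exact hw) (by positivity)
    have he : b / r * (l * r) = l * b := by field_simp
    rw [he] at this
    exact this
  -- fact (ii)
  have hfii : b * Sr / r - Sb ≤ Cr - Cb := fact_two hl hr (le_of_lt hb) hw
  -- goal: Ca*Cb + (c/(a*b))*(Sa*Sb) ≤ Ca*Cr + c*(Sa*Sr/(a*r))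
  have hkey : Sa * (b * Sr / r - Sb) ≤ Ca * (Cr - Cb) := by
    apply mul_le_mul hSaCa hfii _ (le_of_lt hCa0)
    have heq : b / r * Sr = b * Sr / r := by ring
    linarith [hfi]
  -- combine: need (c/(a*b))*(Sa*Sb) - c*(Sa*Sr/(a*r)) ≤ Ca*(Cr - Cb)
  have hmain : c / (a * b) * (Sa * Sb) - c * (Sa * Sr / (a * r)) ≤ Ca * (Cr - Cb) := by
    have hexpand : c / (a * b) * (Sa * Sb) - c * (Sa * Sr / (a * r))
        = (c / a) * Sa * (Sb / b - Sr / r) := by field_simp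
    rw [hexpand]
    have hd : Sb / b - Sr / r ≤ 0 := by
      rw [sub_nonpos, div_le_div_iff₀ hb hr]
      calc Sb * r ≤ (b / r * Sr) * r := by nlinarith
        _ = Sr * b := by field_simp
    have hclow : -(a * b) ≤ c := by linarith [(abs_le.1 hcab).1]
    -- (c/a) * Sa * (negative) ≤ (-(a*b)/a) * Sa * (negative) = -b*Sa*(Sb/b - Sr/r) = Sa*(b*Sr/r - Sb)... 
    have h2 : (c / a) * Sa * (Sb / b - Sr / r) ≤ (-b) * Sa * (Sb / b - Sr / r) := by
      apply mul_le_mul_of_nonpos_right _ hd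
      have hca : -b ≤ c / a := by
        rw [neg_le, ← neg_div, div_le_iff₀ ha]
        linarith
      nlinarith
    refine h2.trans ?_
    have heq : (-b) * Sa * (Sb / b - Sr / r) = Sa * (b * Sr / r - Sb) := by
      field_simp; ring
    rw [heq]
    exact hkey
  nlinarith [hmain]

end KeyLemma

section Prob
open MeasureTheory ProbabilityTheory

variable {F : Type*} [NormedAddCommGroup F] [InnerProductSpace ℝ F]
  [MeasurableSpace F] [BorelSpace F] [SecondCountableTopology F] [CompleteSpace F]

/-- One-step integral bound: if μ is a mean-zero probability measure supported in
the ball of radius r, then ∫ cosh(l‖v+w‖) dμ(w) ≤ cosh(l‖v‖)·cosh(lr). -/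
lemma step_integral {l r : ℝ} (hl : 0 ≤ l) (hr : 0 < r)
    (μ : Measure F) [IsProbabilityMeasure μ]
    (hmean : ∫ w, w ∂μ = 0) (hb : ∀ᵐ w ∂μ, ‖w‖ ≤ r) (v : F) :
    ∫⁻ w, ENNReal.ofReal (Real.cosh (l * ‖v + w‖)) ∂μ
      ≤ ENNReal.ofReal (Real.cosh (l * ‖v‖) * Real.cosh (l * r)) := by
  set K : ℝ := Real.sinh (l * ‖v‖) * Real.sinh (l * r) / (‖v‖ * r) with hK
  have hint_id : Integrable (fun w : F => w) μ := by
    refine Integrable.mono' (integrable_const r) aestronglyMeasurable_id ?_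
    filter_upwards [hb] with w hw
    simpa using hw
  have hint_inner : Integrable (fun w : F => (inner ℝ v w : ℝ) * K) μ := by
    exact (((innerSL ℝ v).integrable_comp hint_id).mul_const K)
  have hint : Integrable (fun w : F =>
      Real.cosh (l * ‖v‖) * Real.cosh (l * r) + (inner ℝ v w : ℝ) * K) μ :=
    (integrable_const _).add hint_inner
  have hnn : 0 ≤ᵐ[μ] (fun w : F =>
      Real.cosh (l * ‖v‖) * Real.cosh (l * r) + (inner ℝ v w : ℝ) * K) := by
    filter_upwards [hb] with w hw
    have h := key_pointwise hl hr v w hw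
    rw [← hK] at h
    have hc := Real.cosh_pos (l * ‖v + w‖)
    simp only [Pi.zero_apply]
    linarith
  calc ∫⁻ w, ENNReal.ofReal (Real.cosh (l * ‖v + w‖)) ∂μ
      ≤ ∫⁻ w, ENNReal.ofReal (Real.cosh (l * ‖v‖) * Real.cosh (l * r)
          + (inner ℝ v w : ℝ) * K) ∂μ := by
        refine lintegral_mono_ae ?_
        filter_upwards [hb] with w hw
        exact ENNReal.ofReal_le_ofReal (key_pointwise hl hr v w hw)
    _ = ENNReal.ofReal (∫ w, (Real.cosh (l * ‖v‖) * Real.cosh (l * r)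
          + (inner ℝ v w : ℝ) * K) ∂μ) :=
        (ofReal_integral_eq_lintegral_ofReal hint hnn).symm
    _ = ENNReal.ofReal (Real.cosh (l * ‖v‖) * Real.cosh (l * r)) := by
        congr 1
        rw [integral_add (integrable_const _) hint_inner, integral_const]
        simp only [probReal_univ, one_smul]
        have : ∫ w, (inner ℝ v w : ℝ) * K ∂μ = (∫ w, (inner ℝ v w : ℝ) ∂μ) * K :=
          integral_mul_const K _
        rw [this, integral_inner hint_id v, hmean, inner_zero_right]
        ring

lemma cosh_moment {Ω : Type*} [MeasureSpace Ω] [IsProbabilityMeasure (ℙ : Measure Ω)]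
    {s : ℕ} (Y : Fin s → Ω → F) (r : Fin s → ℝ) (hr : ∀ i, 0 < r i)
    (hmeas : ∀ i, Measurable (Y i))
    (hindep : iIndepFun Y ℙ)
    (hmean : ∀ i, ∫ ω, Y i ω = 0)
    (hbound : ∀ i, ∀ᵐ ω, ‖Y i ω‖ ≤ r i)
    {l : ℝ} (hl : 0 ≤ l) (G : Finset (Fin s)) :
    ∫⁻ ω, ENNReal.ofReal (Real.cosh (l * ‖∑ i ∈ G, Y i ω‖)) ∂ℙ
      ≤ ∏ i ∈ G, ENNReal.ofReal (Real.cosh (l * r i)) := by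
  classical
  induction G using Finset.induction_on with
  | empty => simp
  | @insert j G hjG ih =>
    set V := fun ω => ∑ i ∈ G, Y i ω with hV
    have hVmeas : Measurable V := Finset.measurable_sum G (fun i _ => hmeas i)
    have hIndep : IndepFun V (Y j) ℙ := by
      have h := hindep.indepFun_finsetSum_of_notMem hmeas hjG
      have he : (∑ i ∈ G, Y i) = V := by funext ω; simp [hV, Finset.sum_apply]
      rwa [he] at h
    have hmap : Measure.map (fun ω => (V ω, Y j ω)) ℙ = (Measure.map V ℙ).prod (Measure.map (Y j) ℙ) :=
      (indepFun_iff_map_prod_eq_prod_map_map hVmeas.aemeasurable (hmeas j).aemeasurable).1 hIndep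
    have hfmeas : Measurable (fun p : F × F => ENNReal.ofReal (Real.cosh (l * ‖p.1 + p.2‖))) :=
      (ENNReal.continuous_ofReal.comp (Real.continuous_cosh.comp
        (continuous_const.mul ((continuous_fst.add continuous_snd).norm)))).measurable
    have hgmeas : Measurable (fun v : F => ENNReal.ofReal (Real.cosh (l * ‖v‖))) :=
      (ENNReal.continuous_ofReal.comp (Real.continuous_cosh.comp
        (continuous_const.mul continuous_norm))).measurable
    haveI : IsProbabilityMeasure (Measure.map (Y j) ℙ) := Measure.isProbabilityMeasure_map (hmeas j).aemeasurable
    haveI : IsProbabilityMeasure (Measure.map V ℙ) := Measure.isProbabilityMeasure_map hVmeas.aemeasurable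
    have hmean' : ∫ w, w ∂(Measure.map (Y j) ℙ) = 0 := by
      show ∫ w, id w ∂(Measure.map (Y j) ℙ) = 0
      rw [integral_map (hmeas j).aemeasurable aestronglyMeasurable_id]
      exact hmean j
    have hb' : ∀ᵐ w ∂(Measure.map (Y j) ℙ), ‖w‖ ≤ r j := by
      rw [ae_map_iff (hmeas j).aemeasurable
        (measurableSet_le continuous_norm.measurable measurable_const)]
      exact hbound j
    calc ∫⁻ ω, ENNReal.ofReal (Real.cosh (l * ‖∑ i ∈ insert j G, Y i ω‖)) ∂ℙ
        = ∫⁻ ω, (fun p : F × F => ENNReal.ofReal (Real.cosh (l * ‖p.1 + p.2‖)))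
            (V ω, Y j ω) ∂ℙ := by
          refine lintegral_congr fun ω => ?_
          rw [Finset.sum_insert hjG, add_comm]
      _ = ∫⁻ p, ENNReal.ofReal (Real.cosh (l * ‖p.1 + p.2‖))
            ∂(Measure.map (fun ω => (V ω, Y j ω)) ℙ) :=
          (lintegral_map hfmeas (hVmeas.prodMk (hmeas j))).symm
      _ = ∫⁻ p, ENNReal.ofReal (Real.cosh (l * ‖p.1 + p.2‖))
            ∂((Measure.map V ℙ).prod (Measure.map (Y j) ℙ)) := by rw [hmap]
      _ = ∫⁻ v, ∫⁻ w, ENNReal.ofReal (Real.cosh (l * ‖v + w‖))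
            ∂(Measure.map (Y j) ℙ) ∂(Measure.map V ℙ) := lintegral_prod _ hfmeas.aemeasurable
      _ ≤ ∫⁻ v, ENNReal.ofReal (Real.cosh (l * ‖v‖) * Real.cosh (l * r j)) ∂(Measure.map V ℙ) :=
          lintegral_mono fun v => step_integral hl (hr j) _ hmean' hb' v
      _ = ∫⁻ v, ENNReal.ofReal (Real.cosh (l * r j))
            * ENNReal.ofReal (Real.cosh (l * ‖v‖)) ∂(Measure.map V ℙ) := by
          refine lintegral_congr fun v => ?_
          rw [← ENNReal.ofReal_mul (Real.cosh_pos _).le, mul_comm]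
      _ = ENNReal.ofReal (Real.cosh (l * r j))
            * ∫⁻ v, ENNReal.ofReal (Real.cosh (l * ‖v‖)) ∂(Measure.map V ℙ) :=
          lintegral_const_mul _ hgmeas
      _ = ENNReal.ofReal (Real.cosh (l * r j))
            * ∫⁻ ω, ENNReal.ofReal (Real.cosh (l * ‖V ω‖)) ∂ℙ := by
          rw [lintegral_map hgmeas hVmeas]
      _ ≤ ENNReal.ofReal (Real.cosh (l * r j))
            * ∏ i ∈ G, ENNReal.ofReal (Real.cosh (l * r i)) := mul_le_mul_right ih _
      _ = ∏ i ∈ insert j G, ENNReal.ofReal (Real.cosh (l * r i)) :=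
          (Finset.prod_insert (f := fun i => ENNReal.ofReal (Real.cosh (l * r i))) hjG).symm

end Prob

open MeasureTheory ProbabilityTheory

/-- Vector Hoeffding inequality: for i.i.d. mean-zero random vectors
Y_i in ℝ^m with ‖Y_i‖ ≤ r_i a.s., the sample mean concentrates:
P(‖(1/s)∑ Y_i‖ > t) ≤ (m+1)·exp(−t²/(2σ²)) with σ² = (1/s²)∑ r_i². -/
theorem stmt6 {m s : ℕ} (hs : 0 < s)
    {Ω : Type*} [MeasureSpace Ω] [IsProbabilityMeasure (ℙ : Measure Ω)]
    (Y : Fin s → Ω → EuclideanSpace ℝ (Fin m)) (r : Fin s → ℝ)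
    (hr : ∀ i, 0 < r i)
    (hmeas : ∀ i, Measurable (Y i))
    (hindep : iIndepFun Y ℙ)
    (hident : ∀ i j, Measure.map (Y i) ℙ = Measure.map (Y j) ℙ)
    (hmean : ∀ i, ∫ ω, Y i ω = 0)
    (hbound : ∀ i, ∀ᵐ ω, ‖Y i ω‖ ≤ r i)
    (t : ℝ) (ht : 0 ≤ t) :
    ℙ {ω | ‖(s : ℝ)⁻¹ • ∑ i, Y i ω‖ > t} ≤
      ENNReal.ofReal (((m : ℝ) + 1) *
        Real.exp (-t ^ 2 / (2 * (((s : ℝ) ^ 2)⁻¹ * ∑ i, r i ^ 2)))) := by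
  classical
  rcases Nat.eq_zero_or_pos m with hm | hm
  · subst hm
    have hempty : {ω | ‖(s : ℝ)⁻¹ • ∑ i, Y i ω‖ > t} = ∅ := by
      ext ω
      simp only [Set.mem_setOf_eq, Set.mem_empty_iff_false, iff_false, not_lt]
      haveI : Subsingleton (EuclideanSpace ℝ (Fin 0)) :=
        ⟨fun a b => PiLp.ext (fun i => i.elim0)⟩
      rw [Subsingleton.elim ((s : ℝ)⁻¹ • ∑ i, Y i ω) 0, norm_zero]
      exact ht
    rw [hempty]
    simp
  have hspos : (0:ℝ) < s := by exact_mod_cast hs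
  have hm1 : (1:ℝ) ≤ m := by exact_mod_cast hm
  set R2 : ℝ := ∑ i, r i ^ 2 with hR2
  have hR2pos : 0 < R2 :=
    Finset.sum_pos (fun i _ => pow_pos (hr i) 2) ⟨⟨0, hs⟩, Finset.mem_univ _⟩
  set l : ℝ := s * t / R2 with hl'
  have hl : 0 ≤ l := by positivity
  set c : ENNReal := ENNReal.ofReal (Real.cosh (l * (s * t))) with hc'
  have hc0 : c ≠ 0 := (ENNReal.ofReal_pos.2 (Real.cosh_pos _)).ne'
  have hctop : c ≠ ⊤ := ENNReal.ofReal_ne_top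
  have hfmeas : Measurable (fun ω => ENNReal.ofReal (Real.cosh (l * ‖∑ i, Y i ω‖))) := by
    have hsum : Measurable (fun ω => ∑ i, Y i ω) :=
      Finset.measurable_sum Finset.univ (fun i _ => hmeas i)
    exact (ENNReal.continuous_ofReal.comp (Real.continuous_cosh.comp
      (continuous_const.mul continuous_norm))).measurable.comp hsum
  -- event inclusion
  have hevent : {ω | ‖(s : ℝ)⁻¹ • ∑ i, Y i ω‖ > t} ⊆
      {ω | c ≤ ENNReal.ofReal (Real.cosh (l * ‖∑ i, Y i ω‖))} := by
    intro ω hω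
    simp only [Set.mem_setOf_eq] at hω ⊢
    have hnorm : ‖(s : ℝ)⁻¹ • ∑ i, Y i ω‖ = (s:ℝ)⁻¹ * ‖∑ i, Y i ω‖ := by
      rw [norm_smul, Real.norm_eq_abs, abs_of_nonneg (by positivity)]
    rw [hnorm] at hω
    have hinv : (s:ℝ) * (s:ℝ)⁻¹ = 1 := mul_inv_cancel₀ (ne_of_gt hspos)
    have hT : s * t ≤ ‖∑ i, Y i ω‖ := by nlinarith [norm_nonneg (∑ i, Y i ω)]
    apply ENNReal.ofReal_le_ofReal
    rw [Real.cosh_le_cosh, abs_of_nonneg (by positivity),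
      abs_of_nonneg (mul_nonneg hl (norm_nonneg _))]
    exact mul_le_mul_of_nonneg_left hT hl
  -- Markov + moment bound
  have hmarkov := mul_meas_ge_le_lintegral₀ (μ := ℙ) hfmeas.aemeasurable c
  have hmoment := cosh_moment Y r hr hmeas hindep hmean hbound hl Finset.univ
  have hPle : ℙ {ω | ‖(s : ℝ)⁻¹ • ∑ i, Y i ω‖ > t} ≤
      (∏ i, ENNReal.ofReal (Real.cosh (l * r i))) / c := by
    refine le_trans (measure_mono hevent) ?_
    rw [ENNReal.le_div_iff_mul_le (Or.inl hc0) (Or.inl hctop)]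
    calc ℙ {ω | c ≤ ENNReal.ofReal (Real.cosh (l * ‖∑ i, Y i ω‖))} * c
        = c * ℙ {ω | c ≤ ENNReal.ofReal (Real.cosh (l * ‖∑ i, Y i ω‖))} := mul_comm _ _
      _ ≤ ∫⁻ ω, ENNReal.ofReal (Real.cosh (l * ‖∑ i, Y i ω‖)) ∂ℙ := hmarkov
      _ ≤ ∏ i, ENNReal.ofReal (Real.cosh (l * r i)) := hmoment
  refine hPle.trans ?_
  -- bound the products
  have hprod : (∏ i, ENNReal.ofReal (Real.cosh (l * r i))) ≤
      ENNReal.ofReal (Real.exp (l ^ 2 * R2 / 2)) := by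
    rw [← ENNReal.ofReal_prod_of_nonneg (fun i _ => (Real.cosh_pos _).le)]
    apply ENNReal.ofReal_le_ofReal
    calc ∏ i, Real.cosh (l * r i) ≤ ∏ i, Real.exp ((l * r i) ^ 2 / 2) :=
          Finset.prod_le_prod (fun i _ => (Real.cosh_pos _).le)
            (fun i _ => Real.cosh_le_exp_half_sq _)
      _ = Real.exp (∑ i, (l * r i) ^ 2 / 2) := by rw [Real.exp_sum]
      _ = Real.exp (l ^ 2 * R2 / 2) := by
          congr 1
          rw [hR2, Finset.mul_sum, Finset.sum_div]
          exact Finset.sum_congr rfl fun i _ => by ring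
  have hcosh_ge : ENNReal.ofReal (Real.exp (l * (s * t)) / 2) ≤ c := by
    apply ENNReal.ofReal_le_ofReal
    rw [Real.cosh_eq]
    have := Real.exp_pos (-(l * (s * t)))
    linarith
  calc (∏ i, ENNReal.ofReal (Real.cosh (l * r i))) / c
      ≤ ENNReal.ofReal (Real.exp (l ^ 2 * R2 / 2)) /
          ENNReal.ofReal (Real.exp (l * (s * t)) / 2) := ENNReal.div_le_div hprod hcosh_ge
    _ = ENNReal.ofReal (Real.exp (l ^ 2 * R2 / 2) / (Real.exp (l * (s * t)) / 2)) :=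
        (ENNReal.ofReal_div_of_pos (by positivity)).symm
    _ ≤ ENNReal.ofReal (((m : ℝ) + 1) *
          Real.exp (-t ^ 2 / (2 * (((s : ℝ) ^ 2)⁻¹ * R2)))) := by
        apply ENNReal.ofReal_le_ofReal
        have hexp_eq : Real.exp (l ^ 2 * R2 / 2) / (Real.exp (l * (s * t)) / 2)
            = 2 * Real.exp (l ^ 2 * R2 / 2 - l * (s * t)) := by
          rw [Real.exp_sub]; field_simp
        rw [hexp_eq]
        have harg : l ^ 2 * R2 / 2 - l * ((s:ℝ) * t) = -t ^ 2 / (2 * (((s:ℝ) ^ 2)⁻¹ * R2)) := by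
          rw [hl']
          field_simp
          ring
        rw [harg]
        have h2m : (2:ℝ) ≤ (m:ℝ) + 1 := by linarith
        nlinarith [Real.exp_pos (-t ^ 2 / (2 * (((s:ℝ) ^ 2)⁻¹ * R2)))]
end

section
/- (No not-sure answers from a local distance-weak oracle when one point is near the center) Let C be a center-based clustering of X with the γ-margin property (γ > 1), let 0 < ρ ≤ 1 and γ ≤ ν ≤ γ+1, and let x* ∈ C_i satisfy d(x*, μ_i) < min{2ρ−1, γ−ν+1}·r(C_i). Then: (a) for every y ∈ C_j with j ≠ i, d(x*, y) > (ν−1)·min{d(x*,μ_i), d(y,μ_j)}; and (b) for every y ∈ C_i, d(x*, y) ≤ 2ρ·r(C_i). Hence neither not-sure condition of a (ν,ρ) local distance-weak oracle is triggered by any query involving x*. -/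
/-- a point x* close enough to its cluster center never triggers a
not-sure answer from a (ν,ρ) local distance-weak oracle. -/
theorem stmt11 {m k : ℕ} (X : Set (EuclideanSpace ℝ (Fin m))) (hX : X.Finite)
    (C : Fin k → Set (EuclideanSpace ℝ (Fin m)))
    (μ : Fin k → EuclideanSpace ℝ (Fin m)) (r : Fin k → ℝ)
    (γ ρ ν : ℝ) (hγ : 1 < γ) (hρ0 : 0 < ρ) (hρ1 : ρ ≤ 1)
    (hν1 : γ ≤ ν) (hν2 : ν ≤ γ + 1)
    (hSub : ∀ i, C i ⊆ X)
    (hr : ∀ i, IsGreatest ((fun z => dist z (μ i)) '' C i) (r i))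
    (hCenter : ∀ x ∈ X, ∀ i, x ∈ C i ↔ ∀ j, j ≠ i → dist x (μ i) < dist x (μ j))
    (hMargin : ∀ i, ∀ x ∈ C i, ∀ y ∈ X, y ∉ C i → γ * dist x (μ i) < dist y (μ i))
    (i : Fin k) (xstar : EuclideanSpace ℝ (Fin m)) (hx : xstar ∈ C i)
    (hclose : dist xstar (μ i) < min (2 * ρ - 1) (γ - ν + 1) * r i) :
    (∀ j, j ≠ i → ∀ y ∈ C j,
        dist xstar y > (ν - 1) * min (dist xstar (μ i)) (dist y (μ j))) ∧
    (∀ y ∈ C i, dist xstar y ≤ 2 * ρ * r i) := by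
  obtain ⟨⟨z, hz, hzr⟩, hub⟩ := hr i
  have hari : dist xstar (μ i) ≤ r i := hub ⟨xstar, hx, rfl⟩
  have hr0 : (0:ℝ) ≤ r i := le_trans dist_nonneg hari
  constructor
  · intro j hj y hy
    have hyX : y ∈ X := hSub j hy
    have hynotCi : y ∉ C i := by
      intro hyCi
      have h1 := (hCenter y hyX i).mp hyCi j hj
      have h2 := (hCenter y hyX j).mp hy i (Ne.symm hj)
      linarith
    have hm : γ * dist z (μ i) < dist y (μ i) := hMargin i z hz y hyX hynotCi
    rw [show dist z (μ i) = r i from hzr] at hm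
    have htri : dist y (μ i) ≤ dist xstar y + dist xstar (μ i) := by
      calc dist y (μ i) ≤ dist y xstar + dist xstar (μ i) := dist_triangle _ _ _
        _ = dist xstar y + dist xstar (μ i) := by rw [dist_comm y xstar]
    have ha : dist xstar (μ i) < (γ - ν + 1) * r i :=
      lt_of_lt_of_le hclose (mul_le_mul_of_nonneg_right (min_le_right _ _) hr0)
    have hν0 : (0:ℝ) ≤ ν - 1 := by linarith
    have hminle : min (dist xstar (μ i)) (dist y (μ j)) ≤ r i :=
      le_trans (min_le_left _ _) hari
    have hprod : (ν - 1) * min (dist xstar (μ i)) (dist y (μ j)) ≤ (ν - 1) * r i :=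
      mul_le_mul_of_nonneg_left hminle hν0
    nlinarith [hprod, htri, ha, hm]
  · intro y hy
    have hbr : dist y (μ i) ≤ r i := hub ⟨y, hy, rfl⟩
    have h2ρ : dist xstar (μ i) < (2 * ρ - 1) * r i :=
      lt_of_lt_of_le hclose (mul_le_mul_of_nonneg_right (min_le_left _ _) hr0)
    have htri : dist xstar y ≤ dist xstar (μ i) + dist (μ i) y := dist_triangle _ _ _
    rw [dist_comm (μ i) y] at htri
    nlinarith [htri, h2ρ, hbr]
end
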